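/- arXiv:1406.3959 — 2 statements merged into one kernel-verified Lean document; each statement's English description precedes it below -/
import Mathlib

section
/- There exists a unique R₁-algebra homomorphism ξ : H^{sp} → H^{A₁} with ξ(U₁) = T, ξ(U₀) = Y·T⁻¹, ξ(V₀) = q^{1/4}·Y·T⁻¹·X⁻¹ and ξ(V₁) = X·T. Moreover ξ(𝕏) = X and ξ(𝕐) = Y, where 𝕏 = V₁⁻¹·U₁⁻¹ and 𝕐 = U₀·U₁ in H^{sp}. -/
noncomputable section

/-- The base ring `R₁ = ℤ[q^{±1/4}, t^{±1/2}]`: the group algebra of `ℤ × ℤ` over `ℤ`,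
where `q^{1/4}` corresponds to the exponent `(1,0)` and `t^{1/2}` to `(0,1)`. -/
abbrev R1 : Type := AddMonoidAlgebra ℤ (ℤ × ℤ)

/-- `q^{1/4}` -/
def R1.q4 : R1 := AddMonoidAlgebra.single (1, 0) 1
/-- `q^{-1/4}` -/
def R1.q4i : R1 := AddMonoidAlgebra.single (-1, 0) 1
/-- `t^{1/2}` -/
def R1.t2 : R1 := AddMonoidAlgebra.single (0, 1) 1
/-- `t^{-1/2}` -/
def R1.t2i : R1 := AddMonoidAlgebra.single (0, -1) 1
/-- `q^{1/2}` -/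
def R1.q2 : R1 := AddMonoidAlgebra.single (2, 0) 1
/-- `q^{-1/2}` -/
def R1.q2i : R1 := AddMonoidAlgebra.single (-2, 0) 1

/-- Generators of the DAHA of type `A₁`: `T, T⁻¹, X, X⁻¹, Y, Y⁻¹`. -/
inductive A1gen : Type
  | t | ti | x | xi | y | yi

open FreeAlgebra in
/-- The defining relations of the DAHA of type `A₁`. -/
inductive A1rel : FreeAlgebra R1 A1gen → FreeAlgebra R1 A1gen → Prop
  | tti : A1rel (ι R1 A1gen.t * ι R1 A1gen.ti) 1
  | tit : A1rel (ι R1 A1gen.ti * ι R1 A1gen.t) 1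
  | xxi : A1rel (ι R1 A1gen.x * ι R1 A1gen.xi) 1
  | xix : A1rel (ι R1 A1gen.xi * ι R1 A1gen.x) 1
  | yyi : A1rel (ι R1 A1gen.y * ι R1 A1gen.yi) 1
  | yiy : A1rel (ι R1 A1gen.yi * ι R1 A1gen.y) 1
  | hecke : A1rel ((ι R1 A1gen.t - algebraMap R1 _ R1.t2) *
      (ι R1 A1gen.t + algebraMap R1 _ R1.t2i)) 0
  | txt : A1rel (ι R1 A1gen.t * ι R1 A1gen.x * ι R1 A1gen.t) (ι R1 A1gen.xi)
  | tiyti : A1rel (ι R1 A1gen.ti * ι R1 A1gen.y * ι R1 A1gen.ti) (ι R1 A1gen.yi)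
  | cross : A1rel (ι R1 A1gen.yi * ι R1 A1gen.xi * ι R1 A1gen.y * ι R1 A1gen.x *
      ι R1 A1gen.t * ι R1 A1gen.t * algebraMap R1 _ R1.q2) 1

/-- The DAHA of type `A₁`. -/
abbrev HA1 : Type := RingQuot A1rel

namespace HA1

def T : HA1 := RingQuot.mkAlgHom R1 A1rel (FreeAlgebra.ι R1 A1gen.t)
def Ti : HA1 := RingQuot.mkAlgHom R1 A1rel (FreeAlgebra.ι R1 A1gen.ti)
def X : HA1 := RingQuot.mkAlgHom R1 A1rel (FreeAlgebra.ι R1 A1gen.x)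
def Xi : HA1 := RingQuot.mkAlgHom R1 A1rel (FreeAlgebra.ι R1 A1gen.xi)
def Y : HA1 := RingQuot.mkAlgHom R1 A1rel (FreeAlgebra.ι R1 A1gen.y)
def Yi : HA1 := RingQuot.mkAlgHom R1 A1rel (FreeAlgebra.ι R1 A1gen.yi)

/-- image of a base-ring element in `H^{A₁}` -/
def c (r : R1) : HA1 := algebraMap R1 HA1 r

end HA1

open HA1

/-- Generators `U₀, U₁, V₀, V₁` of the specialized `C∨C₁` DAHA. -/
inductive Cgen : Type
  | u0 | u1 | v0 | v1

open FreeAlgebra in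
/-- Defining relations of the specialized DAHA `H^{sp}` of type `C∨C₁`
(parameters `u₁ = t`, `u₀ = v₀ = v₁ = 1`). -/
inductive SpRel : FreeAlgebra R1 Cgen → FreeAlgebra R1 Cgen → Prop
  | heckeU1 : SpRel ((ι R1 Cgen.u1 - algebraMap R1 _ R1.t2) *
      (ι R1 Cgen.u1 + algebraMap R1 _ R1.t2i)) 0
  | u0sq : SpRel (ι R1 Cgen.u0 * ι R1 Cgen.u0) 1
  | v0sq : SpRel (ι R1 Cgen.v0 * ι R1 Cgen.v0) 1
  | v1sq : SpRel (ι R1 Cgen.v1 * ι R1 Cgen.v1) 1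
  | unit : SpRel (algebraMap R1 _ R1.q4 * ι R1 Cgen.v1 * ι R1 Cgen.v0 *
      ι R1 Cgen.u0 * ι R1 Cgen.u1) 1

/-- The specialized DAHA of type `C∨C₁`. -/
abbrev Hsp : Type := RingQuot SpRel

namespace Hsp

def U0 : Hsp := RingQuot.mkAlgHom R1 SpRel (FreeAlgebra.ι R1 Cgen.u0)
def U1 : Hsp := RingQuot.mkAlgHom R1 SpRel (FreeAlgebra.ι R1 Cgen.u1)
def V0 : Hsp := RingQuot.mkAlgHom R1 SpRel (FreeAlgebra.ι R1 Cgen.v0)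
def V1 : Hsp := RingQuot.mkAlgHom R1 SpRel (FreeAlgebra.ι R1 Cgen.v1)

/-- `U₁⁻¹ = U₁ − t^{1/2} + t^{−1/2}` -/
def U1i : Hsp := U1 - algebraMap R1 Hsp R1.t2 + algebraMap R1 Hsp R1.t2i
/-- `V₁⁻¹ = V₁ − v₁^{1/2} + v₁^{−1/2} = V₁` (here `v₁ = 1`) -/
def V1i : Hsp := V1
/-- `𝕏 = V₁⁻¹·U₁⁻¹` -/
def XX : Hsp := V1i * U1i
/-- `𝕐 = U₀·U₁` -/
def YY : Hsp := U0 * U1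

end Hsp

/-!
The images of `U₀` and `V₁` square to `1` because `T⁻¹ Y T⁻¹ = Y⁻¹` and `T X T = X⁻¹`, and
`T` satisfies the Hecke relation of `U₁`. The two relations involving `V₀` follow from the
cross relation, rewritten as `X⁻¹ Y = q^{-1/2} Y T⁻² X⁻¹`: it moves `X⁻¹` past `Y`, after
which everything cancels up to the scalar `q^{1/4} q^{1/4} q^{-1/2} = 1`.
Uniqueness holds since `U₀, U₁, V₀, V₁` generate `H^{sp}`, and `ξ(𝕏) = X` because the Hecke
relation makes `U₁ − t^{1/2} + t^{−1/2}` a genuine inverse of `U₁`, so `ξ(U₁⁻¹) = T⁻¹`.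
-/

theorem mul_mul_cancel_of_mul_eq_one {M : Type*} [Monoid M] {a b : M} (h : a * b = 1) (z : M) :
    a * (b * z) = z := by
  rw [← mul_assoc, h, one_mul]

theorem mul_sub_add_eq_one_of_quadratic {A : Type*} [Ring A] {u a b : A} (hua : Commute u a)
    (hab : a * b = 1) (h : (u - a) * (u + b) = 0) : u * (u - a + b) = 1 := by
  calc u * (u - a + b) = (u - a) * (u + b) + a * b + (a * u - u * a) := by noncomm_ring
    _ = 1 := by rw [h, hab, hua.eq, sub_self, zero_add, add_zero]

namespace R1

theorem single_one_mul_single_one (a b : ℤ × ℤ) :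
    (AddMonoidAlgebra.single a 1 * AddMonoidAlgebra.single b 1 : R1) =
      AddMonoidAlgebra.single (a + b) 1 := by
  rw [AddMonoidAlgebra.single_mul_single, one_mul]

theorem t2_mul_t2i : t2 * t2i = 1 := by
  rw [t2, t2i, single_one_mul_single_one]; rfl

theorem q2i_mul_q2 : q2i * q2 = 1 := by
  rw [q2i, q2, single_one_mul_single_one]; rfl

theorem q4_mul_q4_mul_q2i : q4 * q4 * q2i = 1 := by
  rw [q4, q2i, single_one_mul_single_one, single_one_mul_single_one]; rfl

end R1

namespace HA1

theorem T_mul_Ti : T * Ti = 1 := by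
  simpa only [T, Ti, map_mul, map_one] using RingQuot.mkAlgHom_rel R1 A1rel.tti

theorem Ti_mul_T : Ti * T = 1 := by
  simpa only [T, Ti, map_mul, map_one] using RingQuot.mkAlgHom_rel R1 A1rel.tit

theorem X_mul_Xi : X * Xi = 1 := by
  simpa only [X, Xi, map_mul, map_one] using RingQuot.mkAlgHom_rel R1 A1rel.xxi

theorem Y_mul_Yi : Y * Yi = 1 := by
  simpa only [Y, Yi, map_mul, map_one] using RingQuot.mkAlgHom_rel R1 A1rel.yyi

theorem hecke : (T - c R1.t2) * (T + c R1.t2i) = 0 := by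
  simpa only [T, c, map_mul, map_sub, map_add, map_zero, AlgHom.commutes]
    using RingQuot.mkAlgHom_rel R1 A1rel.hecke

theorem T_mul_X_mul_T : T * X * T = Xi := by
  simpa only [T, X, Xi, map_mul] using RingQuot.mkAlgHom_rel R1 A1rel.txt

theorem Ti_mul_Y_mul_Ti : Ti * Y * Ti = Yi := by
  simpa only [Ti, Y, Yi, map_mul] using RingQuot.mkAlgHom_rel R1 A1rel.tiyti

theorem cross : R1.q2 • (Yi * Xi * Y * X * T * T) = 1 := by
  rw [Algebra.smul_def, Algebra.commutes]
  simpa only [T, X, Xi, Y, Yi, map_mul, map_one, AlgHom.commutes] using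
    RingQuot.mkAlgHom_rel R1 A1rel.cross

theorem Ti_mul_Xi_mul_Ti : Ti * Xi * Ti = X := by
  rw [← T_mul_X_mul_T]
  simp only [mul_assoc, mul_mul_cancel_of_mul_eq_one Ti_mul_T, T_mul_Ti, mul_one]

theorem Xi_mul_Y : Xi * Y = R1.q2i • (Y * Ti * Ti * Xi) := by
  calc Xi * Y = R1.q2i • (Y * R1.q2 • (Yi * Xi * Y * X * T * T) * Ti * Ti * Xi) := by
        simp only [mul_assoc, smul_mul_assoc, mul_smul_comm, smul_smul, R1.q2i_mul_q2, one_smul,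
          mul_mul_cancel_of_mul_eq_one Y_mul_Yi, mul_mul_cancel_of_mul_eq_one T_mul_Ti, X_mul_Xi,
          mul_one]
    _ = R1.q2i • (Y * Ti * Ti * Xi) := by rw [cross, mul_one]

theorem Y_mul_Ti_mul_self : Y * Ti * (Y * Ti) = 1 := by
  rw [mul_assoc, ← mul_assoc Ti, Ti_mul_Y_mul_Ti, Y_mul_Yi]

theorem X_mul_T_mul_self : X * T * (X * T) = 1 := by
  rw [mul_assoc, ← mul_assoc T, T_mul_X_mul_T, X_mul_Xi]

theorem Y_mul_Ti_mul_Xi_mul_self : Y * Ti * Xi * (Y * Ti * Xi) = R1.q2i • 1 := by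
  calc Y * Ti * Xi * (Y * Ti * Xi) = Y * Ti * (Xi * Y) * Ti * Xi := by simp only [mul_assoc]
    _ = R1.q2i • (Y * (Ti * Y * Ti) * (Ti * Xi * Ti) * Xi) := by
        rw [Xi_mul_Y]; simp only [mul_assoc, smul_mul_assoc, mul_smul_comm]
    _ = R1.q2i • 1 := by rw [Ti_mul_Y_mul_Ti, Ti_mul_Xi_mul_Ti, Y_mul_Yi, one_mul, X_mul_Xi]

theorem X_mul_T_mul_Y_mul_Ti_mul_Xi_mul_Y_mul_Ti_mul_T :
    X * T * (Y * Ti * Xi) * (Y * Ti) * T = R1.q2i • 1 := by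
  calc X * T * (Y * Ti * Xi) * (Y * Ti) * T = X * T * Y * Ti * (Xi * Y) * Ti * T := by
        simp only [mul_assoc]
    _ = R1.q2i • (X * T * (Y * Ti * (Y * Ti)) * Ti * Xi * (Ti * T)) := by
        rw [Xi_mul_Y]; simp only [mul_assoc, smul_mul_assoc, mul_smul_comm]
    _ = R1.q2i • 1 := by
        rw [Y_mul_Ti_mul_self, Ti_mul_T, mul_one, mul_one, mul_assoc X, T_mul_Ti, mul_one, X_mul_Xi]

end HA1

namespace Hsp

theorem hecke_U1 : (U1 - algebraMap R1 Hsp R1.t2) * (U1 + algebraMap R1 Hsp R1.t2i) = 0 := by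
  simpa only [U1, map_mul, map_sub, map_add, map_zero, AlgHom.commutes]
    using RingQuot.mkAlgHom_rel R1 SpRel.heckeU1

theorem U1_mul_U1i : U1 * U1i = 1 := by
  -- `(A := Hsp)` lets the `RingQuot` subtraction in `hecke_U1` unify with `Ring.toSub`.
  refine mul_sub_add_eq_one_of_quadratic (A := Hsp) (Algebra.commute_algebraMap_right R1.t2 U1)
    ?_ hecke_U1
  rw [← map_mul, R1.t2_mul_t2i, map_one]

theorem algHom_ext {A : Type*} [Semiring A] [Algebra R1 A] {f g : Hsp →ₐ[R1] A}
    (hU0 : f U0 = g U0) (hU1 : f U1 = g U1) (hV0 : f V0 = g V0) (hV1 : f V1 = g V1) :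
    f = g := by
  refine RingQuot.ringQuot_ext' _ _ _ (FreeAlgebra.hom_ext (funext fun x => ?_))
  cases x <;> assumption

def toHA1Gen : Cgen → HA1
  | .u0 => Y * Ti
  | .u1 => T
  | .v0 => c R1.q4 * Y * Ti * Xi
  | .v1 => X * T

theorem toHA1Gen_respects ⦃a b : FreeAlgebra R1 Cgen⦄ (h : SpRel a b) :
    FreeAlgebra.lift R1 toHA1Gen a = FreeAlgebra.lift R1 toHA1Gen b := by
  have hV0 : c R1.q4 * Y * Ti * Xi = R1.q4 • (Y * Ti * Xi) := by
    rw [c, ← Algebra.smul_def, smul_mul_assoc, smul_mul_assoc]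
  have hq : (R1.q4 * R1.q4) • R1.q2i • (1 : HA1) = 1 := by
    rw [smul_smul, R1.q4_mul_q4_mul_q2i, one_smul]
  cases h with
  | heckeU1 =>
    simpa only [map_mul, map_sub, map_add, map_zero, FreeAlgebra.lift_ι_apply, AlgHom.commutes,
      toHA1Gen, c] using hecke
  | u0sq =>
    simpa only [map_mul, map_one, FreeAlgebra.lift_ι_apply, toHA1Gen] using Y_mul_Ti_mul_self
  | v1sq =>
    simpa only [map_mul, map_one, FreeAlgebra.lift_ι_apply, toHA1Gen] using X_mul_T_mul_self
  | v0sq =>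
    simp only [map_mul, map_one, FreeAlgebra.lift_ι_apply, toHA1Gen, hV0]
    rw [smul_mul_smul_comm, Y_mul_Ti_mul_Xi_mul_self, hq]
  | unit =>
    simp only [map_mul, map_one, FreeAlgebra.lift_ι_apply, AlgHom.commutes, toHA1Gen, hV0]
    simp only [← Algebra.smul_def, smul_mul_assoc, mul_smul_comm, smul_smul]
    rw [X_mul_T_mul_Y_mul_Ti_mul_Xi_mul_Y_mul_Ti_mul_T, hq]

def toHA1 : Hsp →ₐ[R1] HA1 :=
  RingQuot.liftAlgHom R1 ⟨FreeAlgebra.lift R1 toHA1Gen, toHA1Gen_respects⟩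

theorem toHA1_mkAlgHom_ι (x : Cgen) :
    toHA1 (RingQuot.mkAlgHom R1 SpRel (FreeAlgebra.ι R1 x)) = toHA1Gen x := by
  rw [toHA1, RingQuot.liftAlgHom_mkAlgHom_apply, FreeAlgebra.lift_ι_apply]

theorem toHA1_U0 : toHA1 U0 = Y * Ti := toHA1_mkAlgHom_ι Cgen.u0

theorem toHA1_U1 : toHA1 U1 = T := toHA1_mkAlgHom_ι Cgen.u1

theorem toHA1_V0 : toHA1 V0 = c R1.q4 * Y * Ti * Xi := toHA1_mkAlgHom_ι Cgen.v0

theorem toHA1_V1 : toHA1 V1 = X * T := toHA1_mkAlgHom_ι Cgen.v1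

end Hsp

/-- there is a unique `R₁`-algebra homomorphism `ξ : H^{sp} → H^{A₁}` with
`ξ(U₁) = T`, `ξ(U₀) = Y·T⁻¹`, `ξ(V₀) = q^{1/4}·Y·T⁻¹·X⁻¹`, `ξ(V₁) = X·T`; moreover
`ξ(𝕏) = X` and `ξ(𝕐) = Y`. -/
theorem statement1 :
    (∃! ξ : Hsp →ₐ[R1] HA1,
      ξ Hsp.U1 = T ∧ ξ Hsp.U0 = Y * Ti ∧
      ξ Hsp.V0 = c R1.q4 * Y * Ti * Xi ∧ ξ Hsp.V1 = X * T) ∧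
    (∀ ξ : Hsp →ₐ[R1] HA1,
      (ξ Hsp.U1 = T ∧ ξ Hsp.U0 = Y * Ti ∧
       ξ Hsp.V0 = c R1.q4 * Y * Ti * Xi ∧ ξ Hsp.V1 = X * T) →
      ξ Hsp.XX = X ∧ ξ Hsp.YY = Y) := by
  refine ⟨⟨Hsp.toHA1, ⟨Hsp.toHA1_U1, Hsp.toHA1_U0, Hsp.toHA1_V0, Hsp.toHA1_V1⟩, ?_⟩, ?_⟩
  · rintro ξ ⟨hU1, hU0, hV0, hV1⟩
    exact Hsp.algHom_ext (hU0.trans Hsp.toHA1_U0.symm) (hU1.trans Hsp.toHA1_U1.symm)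
      (hV0.trans Hsp.toHA1_V0.symm) (hV1.trans Hsp.toHA1_V1.symm)
  · rintro ξ ⟨hU1, hU0, -, hV1⟩
    have hU1i : ξ Hsp.U1i = Ti :=
      (left_inv_eq_right_inv Ti_mul_T (by rw [← hU1, ← map_mul, Hsp.U1_mul_U1i, map_one])).symm
    refine ⟨?_, ?_⟩
    · rw [Hsp.XX, Hsp.V1i, map_mul, hV1, hU1i, mul_assoc, T_mul_Ti, mul_one]
    · rw [Hsp.YY, map_mul, hU0, hU1, mul_assoc, Ti_mul_T, mul_one]
end
end

section
/- Let θ₊ be the ring automorphism of R that interchanges u₀^{1/2} and v₀^{1/2} and fixes q^{1/4}, u₁^{1/2}, v₁^{1/2}. There exists a unique ring automorphism τ₊ of H, semilinear over θ₊, with τ₊(U₁) = U₁, τ₊(V₁) = V₁, τ₊(U₀) = q^{−1/4}·𝕏·U₀⁻¹ (= V₀) and τ₊(V₀) = q^{−1/4}·𝕏·V₀⁻¹. It satisfies τ₊(𝕏) = 𝕏 and τ₊(𝕐) = V₀·U₁ = q^{−1/4}·V₁⁻¹·𝕐⁻¹·U₁. -/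
noncomputable section

/-- The base ring `R = ℤ[q^{±1/4}, u₀^{±1/2}, u₁^{±1/2}, v₀^{±1/2}, v₁^{±1/2}]`:
the group algebra over `ℤ` of the free abelian group on five generators, where the
exponents record the variables `(q^{1/4}, u₀^{1/2}, u₁^{1/2}, v₀^{1/2}, v₁^{1/2})`. -/
abbrev R5 : Type := AddMonoidAlgebra ℤ (ℤ × ℤ × ℤ × ℤ × ℤ)

namespace R5
/-- `q^{1/4}` -/
def q4 : R5 := AddMonoidAlgebra.single (1, 0, 0, 0, 0) 1
/-- `q^{-1/4}` -/
def q4i : R5 := AddMonoidAlgebra.single (-1, 0, 0, 0, 0) 1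
/-- `u₀^{1/2}` -/
def u0h : R5 := AddMonoidAlgebra.single (0, 1, 0, 0, 0) 1
def u0hi : R5 := AddMonoidAlgebra.single (0, -1, 0, 0, 0) 1
/-- `u₁^{1/2}` -/
def u1h : R5 := AddMonoidAlgebra.single (0, 0, 1, 0, 0) 1
def u1hi : R5 := AddMonoidAlgebra.single (0, 0, -1, 0, 0) 1
/-- `v₀^{1/2}` -/
def v0h : R5 := AddMonoidAlgebra.single (0, 0, 0, 1, 0) 1
def v0hi : R5 := AddMonoidAlgebra.single (0, 0, 0, -1, 0) 1
/-- `v₁^{1/2}` -/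
def v1h : R5 := AddMonoidAlgebra.single (0, 0, 0, 0, 1) 1
def v1hi : R5 := AddMonoidAlgebra.single (0, 0, 0, 0, -1) 1
end R5

open FreeAlgebra in
/-- The defining relations of the DAHA of type `C∨C₁`:
`(U_i − u_i^{1/2})(U_i + u_i^{−1/2}) = 0`, `(V_i − v_i^{1/2})(V_i + v_i^{−1/2}) = 0`
for `i = 0, 1`, and `q^{1/4}·V₁·V₀·U₀·U₁ = 1`. -/
inductive Crel : FreeAlgebra R5 Cgen → FreeAlgebra R5 Cgen → Prop
  | heckeU0 : Crel ((ι R5 Cgen.u0 - algebraMap R5 _ R5.u0h) *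
      (ι R5 Cgen.u0 + algebraMap R5 _ R5.u0hi)) 0
  | heckeU1 : Crel ((ι R5 Cgen.u1 - algebraMap R5 _ R5.u1h) *
      (ι R5 Cgen.u1 + algebraMap R5 _ R5.u1hi)) 0
  | heckeV0 : Crel ((ι R5 Cgen.v0 - algebraMap R5 _ R5.v0h) *
      (ι R5 Cgen.v0 + algebraMap R5 _ R5.v0hi)) 0
  | heckeV1 : Crel ((ι R5 Cgen.v1 - algebraMap R5 _ R5.v1h) *
      (ι R5 Cgen.v1 + algebraMap R5 _ R5.v1hi)) 0
  | unit : Crel (algebraMap R5 _ R5.q4 * ι R5 Cgen.v1 * ι R5 Cgen.v0 *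
      ι R5 Cgen.u0 * ι R5 Cgen.u1) 1

/-- The DAHA of type `C∨C₁`. -/
abbrev H : Type := RingQuot Crel

namespace H

def U0 : H := RingQuot.mkAlgHom R5 Crel (FreeAlgebra.ι R5 Cgen.u0)
def U1 : H := RingQuot.mkAlgHom R5 Crel (FreeAlgebra.ι R5 Cgen.u1)
def V0 : H := RingQuot.mkAlgHom R5 Crel (FreeAlgebra.ι R5 Cgen.v0)
def V1 : H := RingQuot.mkAlgHom R5 Crel (FreeAlgebra.ι R5 Cgen.v1)

/-- image of a base-ring element in `H` -/
def c (r : R5) : H := algebraMap R5 H r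

/-- `U₀⁻¹ = U₀ − u₀^{1/2} + u₀^{−1/2}` -/
def U0i : H := U0 - c R5.u0h + c R5.u0hi
/-- `U₁⁻¹ = U₁ − u₁^{1/2} + u₁^{−1/2}` -/
def U1i : H := U1 - c R5.u1h + c R5.u1hi
/-- `V₀⁻¹ = V₀ − v₀^{1/2} + v₀^{−1/2}` -/
def V0i : H := V0 - c R5.v0h + c R5.v0hi
/-- `V₁⁻¹ = V₁ − v₁^{1/2} + v₁^{−1/2}` -/
def V1i : H := V1 - c R5.v1h + c R5.v1hi
/-- `𝕏 = V₁⁻¹·U₁⁻¹` -/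
def XX : H := V1i * U1i
/-- `𝕏⁻¹ = U₁·V₁` -/
def XXi : H := U1 * V1
/-- `𝕐 = U₀·U₁` -/
def YY : H := U0 * U1
/-- `𝕐⁻¹ = U₁⁻¹·U₀⁻¹` -/
def YYi : H := U1i * U0i

end H

open H

/-- `φ : H → H'` is semilinear over `θ : R → R` -/
def Semilin (θ : R5 ≃+* R5) (f : H → H) : Prop :=
  ∀ r : R5, f (algebraMap R5 H r) = algebraMap R5 H (θ r)

/-- `θ₊` interchanges `u₀^{1/2}` and `v₀^{1/2}` fixing `q^{1/4}, u₁^{1/2}, v₁^{1/2}`. -/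
def ThetaPlus (θ : R5 ≃+* R5) : Prop :=
  θ R5.q4 = R5.q4 ∧ θ R5.u1h = R5.u1h ∧ θ R5.v1h = R5.v1h ∧
  θ R5.u0h = R5.v0h ∧ θ R5.v0h = R5.u0h

/-- defining conditions on `τ₊` -/
def TauPlus (θ : R5 ≃+* R5) (τ : H ≃+* H) : Prop :=
  Semilin θ τ ∧ τ U1 = U1 ∧ τ V1 = V1 ∧
  τ U0 = c R5.q4i * XX * U0i ∧ τ V0 = c R5.q4i * XX * V0i

/-!
`θ₊` is induced by the automorphism of the exponent lattice `ℤ⁵` exchanging the coordinates of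
`u₀^{1/2}` and `v₀^{1/2}`; it is unique because a ring homomorphism out of the group ring of a
group over `ℤ` is determined by its values on a generating set of the group.

The unit relation gives `q^{-1/4}·𝕏 = V₀·U₀`, so `τ₊` is prescribed by `U₀ ↦ V₀`,
`V₀ ↦ V₀·U₀·V₀⁻¹`, fixing `U₁, V₁`. These images satisfy the defining relations of `H` with the
parameters twisted by `θ₊`: the Hecke relation of `V₀·U₀·V₀⁻¹` is the conjugate of that of `U₀`,
and `q^{1/4}·V₁·(V₀U₀V₀⁻¹)·V₀·U₁ = q^{1/4}·V₁V₀U₀U₁ = 1`. The universal property of `H` then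
yields a `θ₊`-semilinear endomorphism, and `U₀ ↦ U₀⁻¹·V₀·U₀`, `V₀ ↦ U₀` over `θ₊⁻¹` yields its
inverse. Uniqueness holds because `H` is generated by `R` and the four generators, and the values
on `𝕏` and `𝕐` are read off from those on the generators.
-/

open AddMonoidAlgebra

theorem AddMonoidAlgebra.ringHom_ext_of_closure_eq_top {G S : Type*} [AddGroup G] [Ring S]
    {s : Set G} (hs : AddSubgroup.closure s = ⊤) {f g : AddMonoidAlgebra ℤ G →+* S}
    (h : ∀ a ∈ s, f (single a 1) = g (single a 1)) : f = g := by
  let K : AddSubgroup G :=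
    { carrier := {a | f (single a 1) = g (single a 1)}
      zero_mem' := by simp only [Set.mem_ofPred_eq, ← one_def, map_one]
      add_mem' := fun {a b} (ha : f _ = g _) (hb : f _ = g _) => by
        have hab : (single (a + b) 1 : ℤ[G]) = single a 1 * single b 1 := by
          rw [single_mul_single, one_mul]
        rw [Set.mem_ofPred_eq, hab, map_mul, map_mul, ha, hb]
      neg_mem' := fun {a} (ha : f _ = g _) => by
        have hf : f (single (-a) 1) * f (single a 1) = 1 := by
          rw [← map_mul, single_mul_single, neg_add_cancel, one_mul, ← one_def, map_one]
        have hg : g (single a 1) * g (single (-a) 1) = 1 := by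
          rw [← map_mul, single_mul_single, add_neg_cancel, one_mul, ← one_def, map_one]
        exact left_inv_eq_right_inv hf (ha ▸ hg) }
  have hK (a : G) : f (single a 1) = g (single a 1) :=
    (AddSubgroup.closure_le K).2 h (hs ▸ AddSubgroup.mem_top a)
  refine ringHom_ext (fun n => ?_) hK
  have hn : (single 0 n : ℤ[G]) = n := by simp [intCast_def]
  rw [hn, map_intCast, map_intCast]

namespace R5

lemma closure_basis_eq_top :
    AddSubgroup.closure ({(1, 0, 0, 0, 0), (0, 1, 0, 0, 0), (0, 0, 1, 0, 0), (0, 0, 0, 1, 0),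
      (0, 0, 0, 0, 1)} : Set (ℤ × ℤ × ℤ × ℤ × ℤ)) = ⊤ := by
  refine eq_top_iff.2 fun x _ => ?_
  have hx : x = x.1 • (1, 0, 0, 0, 0) + x.2.1 • (0, 1, 0, 0, 0) + x.2.2.1 • (0, 0, 1, 0, 0) +
      x.2.2.2.1 • (0, 0, 0, 1, 0) + x.2.2.2.2 • (0, 0, 0, 0, 1) := by
    ext <;> simp
  rw [hx]
  refine add_mem (add_mem (add_mem (add_mem ?_ ?_) ?_) ?_) ?_ <;>
    exact zsmul_mem (AddSubgroup.subset_closure (by simp)) _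

lemma ringHom_ext {S : Type*} [Ring S] {f g : R5 →+* S} (hq : f q4 = g q4)
    (hu0 : f u0h = g u0h) (hu1 : f u1h = g u1h) (hv0 : f v0h = g v0h) (hv1 : f v1h = g v1h) :
    f = g :=
  ringHom_ext_of_closure_eq_top closure_basis_eq_top (by
    simp only [Set.mem_insert_iff, Set.mem_singleton_iff, forall_eq_or_imp, forall_eq]
    exact ⟨hq, hu0, hu1, hv0, hv1⟩)

lemma single_mul_single_neg (g : ℤ × ℤ × ℤ × ℤ × ℤ) :
    (single g 1 : R5) * single (-g) 1 = 1 := by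
  rw [single_mul_single, add_neg_cancel, one_mul, one_def]

lemma q4_mul_q4i : q4 * q4i = 1 := single_mul_single_neg _
lemma u0h_mul_u0hi : u0h * u0hi = 1 := single_mul_single_neg _
lemma u1h_mul_u1hi : u1h * u1hi = 1 := single_mul_single_neg _
lemma v0h_mul_v0hi : v0h * v0hi = 1 := single_mul_single_neg _
lemma v1h_mul_v1hi : v1h * v1hi = 1 := single_mul_single_neg _

end R5

def swapU0V0 : (ℤ × ℤ × ℤ × ℤ × ℤ) ≃+ (ℤ × ℤ × ℤ × ℤ × ℤ) where
  toFun x := (x.1, x.2.2.2.1, x.2.2.1, x.2.1, x.2.2.2.2)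
  invFun x := (x.1, x.2.2.2.1, x.2.2.1, x.2.1, x.2.2.2.2)
  left_inv _ := rfl
  right_inv _ := rfl
  map_add' _ _ := rfl

def thetaPlus : R5 ≃+* R5 := (domCongr ℤ ℤ swapU0V0).toRingEquiv

lemma thetaPlus_spec : ThetaPlus thetaPlus := by
  refine ⟨?_, ?_, ?_, ?_, ?_⟩ <;> exact domCongr_single (R := ℤ) (A := ℤ) _ _ _

lemma eq_of_map_eq_of_mul_eq_one {M N F : Type*} [CommMonoid M] [Monoid N] [FunLike F M N]
    [MonoidHomClass F M N] (f : F) {a b : M} {a' b' : N} (hab : a * b = 1) (hab' : a' * b' = 1)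
    (ha : f a = a') : f b = b' :=
  left_inv_eq_right_inv (by rw [← ha, ← map_mul, mul_comm, hab, map_one]) hab'

namespace ThetaPlus

variable {θ : R5 ≃+* R5}

lemma eq (hθ : ThetaPlus θ) {θ' : R5 ≃+* R5} (hθ' : ThetaPlus θ') : θ = θ' := by
  obtain ⟨hq, hu1, hv1, hu0, hv0⟩ := hθ
  obtain ⟨hq', hu1', hv1', hu0', hv0'⟩ := hθ'
  exact RingEquiv.toRingHom_injective <| R5.ringHom_ext (hq.trans hq'.symm)
    (hu0.trans hu0'.symm) (hu1.trans hu1'.symm) (hv0.trans hv0'.symm) (hv1.trans hv1'.symm)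

lemma symm (hθ : ThetaPlus θ) : ThetaPlus θ.symm := by
  obtain ⟨hq, hu1, hv1, hu0, hv0⟩ := hθ
  simp only [ThetaPlus, RingEquiv.symm_apply_eq]
  exact ⟨hq.symm, hu1.symm, hv1.symm, hv0.symm, hu0.symm⟩

lemma map_q4 (hθ : ThetaPlus θ) : θ R5.q4 = R5.q4 := hθ.1
lemma map_u1h (hθ : ThetaPlus θ) : θ R5.u1h = R5.u1h := hθ.2.1
lemma map_v1h (hθ : ThetaPlus θ) : θ R5.v1h = R5.v1h := hθ.2.2.1
lemma map_u0h (hθ : ThetaPlus θ) : θ R5.u0h = R5.v0h := hθ.2.2.2.1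
lemma map_v0h (hθ : ThetaPlus θ) : θ R5.v0h = R5.u0h := hθ.2.2.2.2

lemma map_u1hi (hθ : ThetaPlus θ) : θ R5.u1hi = R5.u1hi :=
  eq_of_map_eq_of_mul_eq_one θ R5.u1h_mul_u1hi R5.u1h_mul_u1hi hθ.2.1

lemma map_v1hi (hθ : ThetaPlus θ) : θ R5.v1hi = R5.v1hi :=
  eq_of_map_eq_of_mul_eq_one θ R5.v1h_mul_v1hi R5.v1h_mul_v1hi hθ.2.2.1

lemma map_u0hi (hθ : ThetaPlus θ) : θ R5.u0hi = R5.v0hi :=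
  eq_of_map_eq_of_mul_eq_one θ R5.u0h_mul_u0hi R5.v0h_mul_v0hi hθ.2.2.2.1

lemma map_v0hi (hθ : ThetaPlus θ) : θ R5.v0hi = R5.u0hi :=
  eq_of_map_eq_of_mul_eq_one θ R5.v0h_mul_v0hi R5.u0h_mul_u0hi hθ.2.2.2.2

end ThetaPlus

section Hecke

variable {R A : Type*} [CommRing R] [Ring A] [Algebra R A] {x : A} {a b : R}

lemma hecke_conj (u : Aˣ) (h : (x - algebraMap R A a) * (x + algebraMap R A b) = 0) :
    (u * x * ↑u⁻¹ - algebraMap R A a) * (u * x * ↑u⁻¹ + algebraMap R A b) = 0 := by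
  simpa [smul_mul', smul_sub, smul_add, ConjAct.units_smul_def] using
    congrArg (ConjAct.toConjAct u • ·) h

def Units.ofHecke (hab : a * b = 1) (h : (x - algebraMap R A a) * (x + algebraMap R A b) = 0) :
    Aˣ where
  val := x
  inv := x - algebraMap R A a + algebraMap R A b
  val_inv := by
    have e : x * (x - algebraMap R A a + algebraMap R A b) =
        (x - algebraMap R A a) * (x + algebraMap R A b) + algebraMap R A a * algebraMap R A b := by
      simp only [mul_add, mul_sub, sub_mul, Algebra.commutes a x]
      abel
    rw [e, h, zero_add, ← map_mul, hab, map_one]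
  inv_val := by
    have e : (x - algebraMap R A a + algebraMap R A b) * x =
        (x - algebraMap R A a) * (x + algebraMap R A b) + algebraMap R A a * algebraMap R A b := by
      simp only [mul_add, add_mul, sub_mul, Algebra.commutes a x, Algebra.commutes b x]
      abel
    rw [e, h, zero_add, ← map_mul, hab, map_one]

end Hecke

namespace H

/-- `map_sub` does not fire on `H` as a rewrite rule: the subtraction of `RingQuot` is not
reducibly the one coming from its `Ring` instance. -/
@[simp] lemma ringHom_map_sub (f : H →+* H) (x y : H) : f (x - y) = f x - f y :=
  map_sub f x y

@[simp] lemma algebraMap_eq_c (r : R5) : algebraMap R5 H r = c r := rfl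

lemma hecke_U0 : (U0 - algebraMap R5 H R5.u0h) * (U0 + algebraMap R5 H R5.u0hi) = 0 := by
  simpa [U0] using RingQuot.mkAlgHom_rel R5 Crel.heckeU0

lemma hecke_U1 : (U1 - algebraMap R5 H R5.u1h) * (U1 + algebraMap R5 H R5.u1hi) = 0 := by
  simpa [U1] using RingQuot.mkAlgHom_rel R5 Crel.heckeU1

lemma hecke_V0 : (V0 - algebraMap R5 H R5.v0h) * (V0 + algebraMap R5 H R5.v0hi) = 0 := by
  simpa [V0] using RingQuot.mkAlgHom_rel R5 Crel.heckeV0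

lemma hecke_V1 : (V1 - algebraMap R5 H R5.v1h) * (V1 + algebraMap R5 H R5.v1hi) = 0 := by
  simpa [V1] using RingQuot.mkAlgHom_rel R5 Crel.heckeV1

lemma c_q4_mul_V1_mul_V0_mul_U0_mul_U1 : c R5.q4 * V1 * V0 * U0 * U1 = 1 := by
  simpa [U0, U1, V0, V1] using RingQuot.mkAlgHom_rel R5 Crel.unit

def unitU0 : Hˣ := Units.ofHecke (R := R5) (A := H) R5.u0h_mul_u0hi hecke_U0
def unitV0 : Hˣ := Units.ofHecke (R := R5) (A := H) R5.v0h_mul_v0hi hecke_V0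

@[simp] lemma coe_unitU0 : (unitU0 : H) = U0 := rfl
@[simp] lemma coe_unitU0_inv : ((unitU0⁻¹ : Hˣ) : H) = U0i := rfl
@[simp] lemma coe_unitV0 : (unitV0 : H) = V0 := rfl
@[simp] lemma coe_unitV0_inv : ((unitV0⁻¹ : Hˣ) : H) = V0i := rfl

lemma U0_mul_U0i : U0 * U0i = 1 := unitU0.val_inv
lemma U0i_mul_U0 : U0i * U0 = 1 := unitU0.inv_val
lemma U1_mul_U1i : U1 * U1i = 1 :=
  (Units.ofHecke (R := R5) (A := H) R5.u1h_mul_u1hi hecke_U1).val_inv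
lemma V0i_mul_V0 : V0i * V0 = 1 := unitV0.inv_val
lemma V1i_mul_V1 : V1i * V1 = 1 :=
  (Units.ofHecke (R := R5) (A := H) R5.v1h_mul_v1hi hecke_V1).inv_val

lemma mul_U0_mul_U0i (x : H) : x * U0 * U0i = x := Units.mul_inv_cancel_right x unitU0
lemma mul_V0i_mul_V0 (x : H) : x * V0i * V0 = x := Units.inv_mul_cancel_right x unitV0

lemma c_comm (r : R5) (x : H) : c r * x = x * c r := Algebra.commutes r x

lemma c_q4i_mul_c_q4 : c R5.q4i * c R5.q4 = 1 := by
  rw [c, c, ← map_mul, mul_comm, R5.q4_mul_q4i, map_one]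

lemma V1_mul_V0_mul_U0_mul_U1 : V1 * V0 * U0 * U1 = c R5.q4i := by
  rw [← mul_one (c R5.q4i), ← c_q4_mul_V1_mul_V0_mul_U0_mul_U1]
  simp only [← mul_assoc, c_q4i_mul_c_q4, one_mul]

lemma V0_eq : V0 = c R5.q4i * V1i * U1i * U0i :=
  calc V0 = V1i * V1 * V0 * (U0 * (U1 * U1i) * U0i) := by
        rw [V1i_mul_V1, U1_mul_U1i, mul_one, U0_mul_U0i, one_mul, mul_one]
    _ = V1i * (V1 * V0 * U0 * U1) * U1i * U0i := by simp only [mul_assoc]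
    _ = c R5.q4i * V1i * U1i * U0i := by rw [V1_mul_V0_mul_U0_mul_U1, c_comm]

lemma c_q4i_mul_XX_mul_U0i : c R5.q4i * XX * U0i = V0 := by
  rw [V0_eq, XX]
  simp only [mul_assoc]

lemma c_q4i_mul_XX : c R5.q4i * XX = V0 * U0 := by
  rw [← c_q4i_mul_XX_mul_U0i, mul_assoc _ U0i, U0i_mul_U0, mul_one]

lemma V0_mul_U1 : V0 * U1 = c R5.q4i * V1i * YYi * U1 := by
  rw [V0_eq, YYi]
  simp only [mul_assoc]

section UniversalProperty

variable {A : Type*} [Ring A]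

def gen (i : Cgen) : H := RingQuot.mkAlgHom R5 Crel (FreeAlgebra.ι R5 i)

structure SatisfiesRelations (φ : R5 →+* A) (g : Cgen → A) : Prop where
  hecke_u0 : (g .u0 - φ R5.u0h) * (g .u0 + φ R5.u0hi) = 0
  hecke_u1 : (g .u1 - φ R5.u1h) * (g .u1 + φ R5.u1hi) = 0
  hecke_v0 : (g .v0 - φ R5.v0h) * (g .v0 + φ R5.v0hi) = 0
  hecke_v1 : (g .v1 - φ R5.v1h) * (g .v1 + φ R5.v1hi) = 0
  unit : φ R5.q4 * g .v1 * g .v0 * g .u0 * g .u1 = 1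

def lift (φ : R5 →+* A) (hφ : ∀ r x, φ r * x = x * φ r) (g : Cgen → A)
    (hg : SatisfiesRelations φ g) : H →+* A :=
  letI := φ.toAlgebra' hφ
  (RingQuot.liftAlgHom R5 ⟨FreeAlgebra.lift R5 g, fun x y h => by
    cases h <;>
      simp only [map_mul, map_sub, map_add, map_zero, map_one, FreeAlgebra.lift_ι_apply,
        AlgHom.commutes, RingHom.algebraMap_toAlgebra']
    exacts [hg.hecke_u0, hg.hecke_u1, hg.hecke_v0, hg.hecke_v1, hg.unit]⟩).toRingHom

variable {φ : R5 →+* A} {hφ : ∀ r x, φ r * x = x * φ r} {g : Cgen → A}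
  {hg : SatisfiesRelations φ g}

lemma lift_algebraMap (r : R5) : lift φ hφ g hg (algebraMap R5 H r) = φ r := by
  let _ := φ.toAlgebra' hφ
  exact AlgHom.commutes _ r

lemma lift_gen (i : Cgen) : lift φ hφ g hg (gen i) = g i := by
  simp [lift, gen]

lemma ringHom_ext {B : Type*} [Semiring B] {f f' : H →+* B}
    (hc : ∀ r, f (c r) = f' (c r)) (hU0 : f U0 = f' U0) (hU1 : f U1 = f' U1)
    (hV0 : f V0 = f' V0) (hV1 : f V1 = f' V1) : f = f' := by
  refine RingHom.ext fun x => ?_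
  obtain ⟨y, rfl⟩ := RingQuot.mkAlgHom_surjective R5 Crel x
  induction y using FreeAlgebra.induction with
  | grade0 r => rw [AlgHom.commutes]; exact hc r
  | grade1 i => cases i <;> assumption
  | mul a b ha hb => rw [map_mul, map_mul, map_mul, ha, hb]
  | add a b ha hb => rw [map_add, map_add, map_add, ha, hb]

end UniversalProperty

def semilinLift (θ : R5 →+* R5) (g : Cgen → H)
    (hg : SatisfiesRelations ((algebraMap R5 H).comp θ) g) : H →+* H :=
  lift _ (fun r x => Algebra.commutes (θ r) x) g hg

section semilinLift

variable {θ : R5 →+* R5} {g : Cgen → H} {hg : SatisfiesRelations ((algebraMap R5 H).comp θ) g}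

@[simp] lemma semilinLift_c (r : R5) : semilinLift θ g hg (c r) = c (θ r) := lift_algebraMap r
@[simp] lemma semilinLift_U0 : semilinLift θ g hg U0 = g .u0 := lift_gen .u0
@[simp] lemma semilinLift_U1 : semilinLift θ g hg U1 = g .u1 := lift_gen .u1
@[simp] lemma semilinLift_V0 : semilinLift θ g hg V0 = g .v0 := lift_gen .v0
@[simp] lemma semilinLift_V1 : semilinLift θ g hg V1 = g .v1 := lift_gen .v1

end semilinLift

def tauPlusGen : Cgen → H
  | .u0 => V0
  | .u1 => U1
  | .v0 => V0 * U0 * V0i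
  | .v1 => V1

def tauPlusInvGen : Cgen → H
  | .u0 => U0i * V0 * U0
  | .u1 => U1
  | .v0 => U0
  | .v1 => V1

variable {θ : R5 ≃+* R5}

lemma satisfiesRelations_tauPlusGen (hθ : ThetaPlus θ) :
    SatisfiesRelations ((algebraMap R5 H).comp θ) tauPlusGen where
  hecke_u0 := by simpa [tauPlusGen, hθ.map_u0h, hθ.map_u0hi] using hecke_V0
  hecke_u1 := by simpa [tauPlusGen, hθ.map_u1h, hθ.map_u1hi] using hecke_U1
  hecke_v0 := by
    simpa [tauPlusGen, hθ.map_v0h, hθ.map_v0hi] using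
      hecke_conj (R := R5) (A := H) unitV0 hecke_U0
  hecke_v1 := by simpa [tauPlusGen, hθ.map_v1h, hθ.map_v1hi] using hecke_V1
  unit := by
    simp only [RingHom.comp_apply, RingEquiv.coe_toRingHom, hθ.map_q4, tauPlusGen, ← mul_assoc,
      mul_V0i_mul_V0]
    exact c_q4_mul_V1_mul_V0_mul_U0_mul_U1

lemma satisfiesRelations_tauPlusInvGen (hθ : ThetaPlus θ) :
    SatisfiesRelations ((algebraMap R5 H).comp θ) tauPlusInvGen where
  hecke_u0 := by
    simpa [tauPlusInvGen, hθ.map_u0h, hθ.map_u0hi] using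
      hecke_conj (R := R5) (A := H) unitU0⁻¹ hecke_V0
  hecke_u1 := by simpa [tauPlusInvGen, hθ.map_u1h, hθ.map_u1hi] using hecke_U1
  hecke_v0 := by simpa [tauPlusInvGen, hθ.map_v0h, hθ.map_v0hi] using hecke_U0
  hecke_v1 := by simpa [tauPlusInvGen, hθ.map_v1h, hθ.map_v1hi] using hecke_V1
  unit := by
    simp only [RingHom.comp_apply, RingEquiv.coe_toRingHom, hθ.map_q4, tauPlusInvGen,
      ← mul_assoc, mul_U0_mul_U0i]
    exact c_q4_mul_V1_mul_V0_mul_U0_mul_U1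

lemma semilinLift_tauPlusGen_U0i (hθ : ThetaPlus θ)
    {hg : SatisfiesRelations ((algebraMap R5 H).comp θ) tauPlusGen} :
    semilinLift θ tauPlusGen hg U0i = V0i := by
  simp [tauPlusGen, U0i, V0i, hθ.map_u0h, hθ.map_u0hi]

lemma semilinLift_tauPlusInvGen_V0i (hθ : ThetaPlus θ)
    {hg : SatisfiesRelations ((algebraMap R5 H).comp θ) tauPlusInvGen} :
    semilinLift θ tauPlusInvGen hg V0i = U0i := by
  simp [tauPlusInvGen, U0i, V0i, hθ.map_v0h, hθ.map_v0hi]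

def tauPlusHom (hθ : ThetaPlus θ) : H →+* H :=
  semilinLift θ tauPlusGen (satisfiesRelations_tauPlusGen hθ)

def tauPlusInvHom (hθ : ThetaPlus θ) : H →+* H :=
  semilinLift θ.symm tauPlusInvGen (satisfiesRelations_tauPlusInvGen hθ.symm)

lemma tauPlusInvHom_comp_tauPlusHom (hθ : ThetaPlus θ) :
    (tauPlusInvHom hθ).comp (tauPlusHom hθ) = RingHom.id H := by
  refine ringHom_ext ?_ ?_ ?_ ?_ ?_ <;>
    simp [tauPlusHom, tauPlusInvHom, tauPlusGen, tauPlusInvGen,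
      semilinLift_tauPlusInvGen_V0i hθ.symm, ← mul_assoc, mul_U0_mul_U0i, U0_mul_U0i]

lemma tauPlusHom_comp_tauPlusInvHom (hθ : ThetaPlus θ) :
    (tauPlusHom hθ).comp (tauPlusInvHom hθ) = RingHom.id H := by
  refine ringHom_ext ?_ ?_ ?_ ?_ ?_ <;>
    simp [tauPlusHom, tauPlusInvHom, tauPlusGen, tauPlusInvGen,
      semilinLift_tauPlusGen_U0i hθ, ← mul_assoc, mul_V0i_mul_V0, V0i_mul_V0]

def tauPlus (hθ : ThetaPlus θ) : H ≃+* H :=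
  .ofRingHom (tauPlusHom hθ) (tauPlusInvHom hθ) (tauPlusHom_comp_tauPlusInvHom hθ)
    (tauPlusInvHom_comp_tauPlusHom hθ)

lemma tauPlus_spec (hθ : ThetaPlus θ) : TauPlus θ (tauPlus hθ) := by
  refine ⟨fun r => by simp [tauPlus, tauPlusHom], by simp [tauPlus, tauPlusHom, tauPlusGen],
    by simp [tauPlus, tauPlusHom, tauPlusGen], ?_, ?_⟩
  · rw [c_q4i_mul_XX_mul_U0i]
    simp [tauPlus, tauPlusHom, tauPlusGen]
  · rw [c_q4i_mul_XX]
    simp [tauPlus, tauPlusHom, tauPlusGen]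

end H

namespace TauPlus

variable {θ : R5 ≃+* R5} {τ : H ≃+* H}

lemma map_c (hτ : TauPlus θ τ) (r : R5) : τ (c r) = c (θ r) := hτ.1 r
lemma map_U1 (hτ : TauPlus θ τ) : τ U1 = U1 := hτ.2.1
lemma map_V1 (hτ : TauPlus θ τ) : τ V1 = V1 := hτ.2.2.1
lemma map_U0 (hτ : TauPlus θ τ) : τ U0 = V0 := hτ.2.2.2.1.trans c_q4i_mul_XX_mul_U0i
lemma map_V0 (hτ : TauPlus θ τ) : τ V0 = V0 * U0 * V0i := by rw [hτ.2.2.2.2, c_q4i_mul_XX]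

lemma eq {τ' : H ≃+* H} (hτ : TauPlus θ τ) (hτ' : TauPlus θ τ') : τ = τ' :=
  RingEquiv.toRingHom_injective <|
    H.ringHom_ext (fun r => (hτ.map_c r).trans (hτ'.map_c r).symm)
    (hτ.map_U0.trans hτ'.map_U0.symm) (hτ.map_U1.trans hτ'.map_U1.symm)
    (hτ.map_V0.trans hτ'.map_V0.symm) (hτ.map_V1.trans hτ'.map_V1.symm)

lemma map_XX (hθ : ThetaPlus θ) (hτ : TauPlus θ τ) : τ XX = XX := by
  rw [XX, V1i, U1i, map_mul, map_add, map_add, map_sub τ V1, map_sub τ U1, hτ.map_U1,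
    hτ.map_V1, hτ.map_c, hτ.map_c, hτ.map_c, hτ.map_c, hθ.map_u1h, hθ.map_u1hi, hθ.map_v1h,
    hθ.map_v1hi]

lemma map_YY (hτ : TauPlus θ τ) : τ YY = V0 * U1 := by
  rw [YY, map_mul, hτ.map_U0, hτ.map_U1]

end TauPlus

/-- there is a unique ring automorphism `τ₊` of `H`, semilinear over `θ₊`,
with `τ₊(U₁) = U₁`, `τ₊(V₁) = V₁`, `τ₊(U₀) = q^{−1/4}·𝕏·U₀⁻¹ (= V₀)`,
`τ₊(V₀) = q^{−1/4}·𝕏·V₀⁻¹`; it satisfies `τ₊(𝕏) = 𝕏` and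
`τ₊(𝕐) = V₀·U₁ = q^{−1/4}·V₁⁻¹·𝕐⁻¹·U₁`. -/
theorem statement7 :
    (∃! θ : R5 ≃+* R5, ThetaPlus θ) ∧
    ∀ θ : R5 ≃+* R5, ThetaPlus θ →
      (∃! τ : H ≃+* H, TauPlus θ τ) ∧
      (c R5.q4i * XX * U0i = V0) ∧
      ∀ τ : H ≃+* H, TauPlus θ τ →
        τ XX = XX ∧ τ YY = V0 * U1 ∧ V0 * U1 = c R5.q4i * V1i * YYi * U1 := by
  refine ⟨⟨thetaPlus, thetaPlus_spec, fun _ hθ => hθ.eq thetaPlus_spec⟩, fun θ hθ => ?_⟩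
  exact ⟨⟨tauPlus hθ, tauPlus_spec hθ, fun _ hτ => hτ.eq (tauPlus_spec hθ)⟩,
    c_q4i_mul_XX_mul_U0i, fun _ hτ => ⟨hτ.map_XX hθ, hτ.map_YY, V0_mul_U1⟩⟩
end
end
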